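/- Let H and A be linearly ordered abelian groups, (K,v) a field with an additive valuation v with value group A, σ : A → Kˣ a cross-section for v, and β : H × H → A a normalized symmetric 2-cocycle. Define val on nonzero elements of the twisted Hahn series field K(t^H,β) by val(f) = (v(f.coeff h₀), h₀), where h₀ = min supp(f). Then: (i) for all nonzero a, b one has a ⋆ b ≠ 0 and val(a ⋆ b) = val(a) ⊕ val(b), where ⊕ is the twisted addition (z,h) ⊕ (z',h') = (z + z' − β(h,h'), h+h') on A × H; and (ii) for all nonzero a, b with a + b ≠ 0, val(a + b) ≥ min(val(a), val(b)) in the order (z,h) ≤ (z',h') iff h < h' or (h = h' and z ≤ z'). Hence val is a valuation on K(t^H,β) with value group G_β. -/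

import Mathlib

/-- Twisted multiplication on Hahn series. -/
noncomputable def tmul {K H A : Type*} [Field K]
    [AddCommGroup H] [LinearOrder H] [IsOrderedAddMonoid H] [AddCommGroup A]
    (σ : A → Kˣ) (β : H → H → A) (x y : HahnSeries H K) : HahnSeries H K where
  coeff l := ∑ ij ∈ Finset.addAntidiagonal x.isPWO_support y.isPWO_support l,
      x.coeff ij.1 * y.coeff ij.2 * (σ (-β ij.1 ij.2) : K)
  isPWO_support' := by
    refine Set.IsPWO.mono (x.isPWO_support.add y.isPWO_support) ?_
    intro l hl
    obtain ⟨ij, hij, -⟩ :=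
      Finset.exists_ne_zero_of_sum_ne_zero (Function.mem_support.mp hl)
    simp only [Finset.addAntidiagonal, Finset.mem_antidiagonal] at hij
    exact Set.mem_add.mpr ⟨ij.1, hij.1, ij.2, hij.2.1, hij.2.2⟩

/-- The minimum of the support of a nonzero Hahn series. -/
noncomputable def minSupp {K H : Type*} [Field K] [AddCommGroup H] [LinearOrder H] [IsOrderedAddMonoid H]
    (f : HahnSeries H K) (hf : f ≠ 0) : H :=
  f.isWF_support.min (HahnSeries.support_nonempty_iff.mpr hf)

/-- The valuation `val f = (v (f.coeff h₀), h₀)`, `h₀ = min supp f`, of a nonzero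
Hahn series. -/
noncomputable def tval {K H A : Type*} [Field K] [AddCommGroup H] [LinearOrder H] [IsOrderedAddMonoid H]
    [AddCommGroup A] [LinearOrder A] [IsOrderedAddMonoid A]
    (v : K → WithTop A) (f : HahnSeries H K) (hf : f ≠ 0) : WithTop A × H :=
  (v (f.coeff (minSupp f hf)), minSupp f hf)

/-- The order `(z,h) ≤ (z',h') ↔ h < h' ∨ (h = h' ∧ z ≤ z')` on values. -/
def pLe {A H : Type*} [AddCommGroup A] [LinearOrder A] [IsOrderedAddMonoid A] [AddCommGroup H] [LinearOrder H] [IsOrderedAddMonoid H]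
    (p q : WithTop A × H) : Prop :=
  p.2 < q.2 ∨ (p.2 = q.2 ∧ p.1 ≤ q.1)

/-!
In `a ⋆ b` the only pair of exponents summing to `minSupp a + minSupp b` is the pair of minimal
exponents itself, so the lowest coefficient of `a ⋆ b` is `a₀ b₀ σ(-β(h_a, h_b))`; it is nonzero,
and since `v (σ z) = z` its value is `v a₀ + v b₀ - β(h_a, h_b)`, which is the twisted addition.
For a sum, the lowest exponent of `a + b` is at least the smaller of those of `a` and `b`; when
it equals both, the ultrametric inequality for `v` compares the lowest coefficients.
-/

section MinSupp

variable {K H : Type*} [Field K] [AddCommGroup H] [LinearOrder H] [IsOrderedAddMonoid H]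

lemma coeff_minSupp_ne_zero (f : HahnSeries H K) (hf : f ≠ 0) :
    f.coeff (minSupp f hf) ≠ 0 :=
  f.isWF_support.min_mem _

lemma minSupp_le_of_coeff_ne_zero {f : HahnSeries H K} (hf : f ≠ 0) {l : H}
    (hl : f.coeff l ≠ 0) : minSupp f hf ≤ l :=
  f.isWF_support.min_le _ hl

lemma coeff_eq_zero_of_lt_minSupp {f : HahnSeries H K} (hf : f ≠ 0) {l : H}
    (hl : l < minSupp f hf) : f.coeff l = 0 := by
  by_contra h
  exact hl.not_ge (minSupp_le_of_coeff_ne_zero hf h)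

lemma min_minSupp_le_minSupp_add {a b : HahnSeries H K} (ha : a ≠ 0) (hb : b ≠ 0)
    (hab : a + b ≠ 0) : min (minSupp a ha) (minSupp b hb) ≤ minSupp (a + b) hab :=
  HahnSeries.min_le_min_add ha hb hab

end MinSupp

section TwistedProduct

variable {K H A : Type*} [Field K] [AddCommGroup H] [LinearOrder H] [IsOrderedAddMonoid H]
    [AddCommGroup A] (σ : A → Kˣ) (β : H → H → A)

lemma coeff_tmul_minSupp_add_minSupp {a b : HahnSeries H K} (ha : a ≠ 0) (hb : b ≠ 0) :
    (tmul σ β a b).coeff (minSupp a ha + minSupp b hb)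
      = a.coeff (minSupp a ha) * b.coeff (minSupp b hb)
        * (σ (-β (minSupp a ha) (minSupp b hb)) : K) := by
  change ∑ ij ∈ Finset.antidiagonal a.isWF_support.isPWO b.isWF_support.isPWO _, _ = _
  unfold minSupp
  rw [Finset.antidiagonal_min_add_min, Finset.sum_singleton]

lemma minSupp_add_minSupp_le_of_coeff_tmul_ne_zero {a b : HahnSeries H K} (ha : a ≠ 0)
    (hb : b ≠ 0) {l : H} (hl : (tmul σ β a b).coeff l ≠ 0) :
    minSupp a ha + minSupp b hb ≤ l := by
  obtain ⟨ij, hij, -⟩ := Finset.exists_ne_zero_of_sum_ne_zero hl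
  obtain ⟨hi, hj, rfl⟩ := Finset.mem_antidiagonal.mp hij
  exact add_le_add (minSupp_le_of_coeff_ne_zero ha hi) (minSupp_le_of_coeff_ne_zero hb hj)

lemma coeff_tmul_minSupp_add_minSupp_ne_zero {a b : HahnSeries H K} (ha : a ≠ 0)
    (hb : b ≠ 0) : (tmul σ β a b).coeff (minSupp a ha + minSupp b hb) ≠ 0 := by
  rw [coeff_tmul_minSupp_add_minSupp]
  exact mul_ne_zero (mul_ne_zero (coeff_minSupp_ne_zero a ha) (coeff_minSupp_ne_zero b hb))
    (Units.ne_zero _)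

lemma tmul_ne_zero {a b : HahnSeries H K} (ha : a ≠ 0) (hb : b ≠ 0) : tmul σ β a b ≠ 0 :=
  HahnSeries.ne_zero_of_coeff_ne_zero (coeff_tmul_minSupp_add_minSupp_ne_zero σ β ha hb)

lemma minSupp_tmul {a b : HahnSeries H K} (ha : a ≠ 0) (hb : b ≠ 0)
    (hab : tmul σ β a b ≠ 0) :
    minSupp (tmul σ β a b) hab = minSupp a ha + minSupp b hb :=
  le_antisymm
    (minSupp_le_of_coeff_ne_zero hab (coeff_tmul_minSupp_add_minSupp_ne_zero σ β ha hb))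
    (minSupp_add_minSupp_le_of_coeff_tmul_ne_zero σ β ha hb (coeff_minSupp_ne_zero _ hab))

lemma valuation_coeff_minSupp_tmul (v : K → WithTop A)
    (hv_mul : ∀ x y : K, v (x * y) = v x + v y)
    (hσ_cross : ∀ a : A, v ((σ a : K)) = (a : WithTop A))
    {a b : HahnSeries H K} (ha : a ≠ 0) (hb : b ≠ 0) (hab : tmul σ β a b ≠ 0) :
    v ((tmul σ β a b).coeff (minSupp (tmul σ β a b) hab))
        + (β (minSupp a ha) (minSupp b hb) : WithTop A)
      = v (a.coeff (minSupp a ha)) + v (b.coeff (minSupp b hb)) := by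
  rw [minSupp_tmul σ β ha hb, coeff_tmul_minSupp_add_minSupp, hv_mul, hv_mul, hσ_cross,
    add_assoc, ← WithTop.coe_add, neg_add_cancel, WithTop.coe_zero, add_zero]

end TwistedProduct

section Sum

variable {K H A : Type*} [Field K] [AddCommGroup H] [LinearOrder H] [IsOrderedAddMonoid H]
    [AddCommGroup A] [LinearOrder A] [IsOrderedAddMonoid A] (v : K → WithTop A)

lemma pLe_tval_or_pLe_tval_of_minSupp_le (hv_add : ∀ x y : K, min (v x) (v y) ≤ v (x + y))
    {a b c : HahnSeries H K} (ha : a ≠ 0) (hb : b ≠ 0) (hc : c ≠ 0) (hcab : c = a + b)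
    (hle : minSupp a ha ≤ minSupp b hb) :
    pLe (tval v a ha) (tval v c hc) ∨ pLe (tval v b hb) (tval v c hc) := by
  subst hcab
  have hac : minSupp a ha ≤ minSupp (a + b) hc := by
    simpa only [min_eq_left hle] using min_minSupp_le_minSupp_add ha hb hc
  rcases hac.lt_or_eq with hlt | hac
  · exact Or.inl (Or.inl hlt)
  unfold pLe tval
  rcases hle.lt_or_eq with hlt | hab
  · refine Or.inl (Or.inr ⟨hac, ?_⟩)
    rw [← hac, HahnSeries.coeff_add, coeff_eq_zero_of_lt_minSupp hb hlt, add_zero]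
  · rw [← hac, ← hab, HahnSeries.coeff_add]
    rcases min_choice (v (a.coeff (minSupp a ha))) (v (b.coeff (minSupp a ha))) with h | h
    · exact Or.inl (Or.inr ⟨rfl, h ▸ hv_add _ _⟩)
    · exact Or.inr (Or.inr ⟨rfl, h ▸ hv_add _ _⟩)

end Sum

theorem twisted_hahn_series_valuation_general
    {K H A : Type*} [Field K]
    [AddCommGroup H] [LinearOrder H] [IsOrderedAddMonoid H] [AddCommGroup A] [LinearOrder A] [IsOrderedAddMonoid A]
    (v : K → WithTop A)
    (hv_mul : ∀ x y : K, v (x * y) = v x + v y)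
    (hv_add : ∀ x y : K, min (v x) (v y) ≤ v (x + y))
    (σ : A → Kˣ)
    (hσ_cross : ∀ a : A, v ((σ a : K)) = (a : WithTop A))
    (β : H → H → A) :
    (∀ (a b : HahnSeries H K) (ha : a ≠ 0) (hb : b ≠ 0),
      ∃ hab : tmul σ β a b ≠ 0,
        minSupp (tmul σ β a b) hab = minSupp a ha + minSupp b hb ∧
        v ((tmul σ β a b).coeff (minSupp (tmul σ β a b) hab))
            + (β (minSupp a ha) (minSupp b hb) : WithTop A)
          = v (a.coeff (minSupp a ha)) + v (b.coeff (minSupp b hb))) ∧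
    (∀ (a b : HahnSeries H K) (ha : a ≠ 0) (hb : b ≠ 0) (hab : a + b ≠ 0),
      pLe (tval v a ha) (tval v (a + b) hab) ∨
      pLe (tval v b hb) (tval v (a + b) hab)) := by
  refine ⟨fun a b ha hb => ⟨tmul_ne_zero σ β ha hb, minSupp_tmul σ β ha hb _,
    valuation_coeff_minSupp_tmul σ β v hv_mul hσ_cross ha hb _⟩, fun a b ha hb hab => ?_⟩
  rcases le_total (minSupp a ha) (minSupp b hb) with h | h
  · exact pLe_tval_or_pLe_tval_of_minSupp_le v hv_add ha hb hab rfl h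
  · exact (pLe_tval_or_pLe_tval_of_minSupp_le v hv_add hb ha hab (add_comm a b) h).symm

/-- For a field `K` with additive valuation `v` with value group `A`
and cross-section `σ`, and a normalized symmetric 2-cocycle `β : H × H → A`,
the map `val f = (v (f.coeff h₀), h₀)` (`h₀ = min supp f`) on nonzero twisted
Hahn series satisfies: (i) products of nonzero elements are nonzero and
`val (a ⋆ b) = val a ⊕ val b` for the twisted addition
`(z,h) ⊕ (z',h') = (z + z' - β h h', h + h')` (stated additively:
the minimal exponents add, and the `v`-components satisfy
`v(..) + β(h_a, h_b) = v(..) + v(..)`); (ii) `val (a+b) ≥ min (val a) (val b)`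
in the order `(z,h) ≤ (z',h') ↔ h < h' ∨ (h = h' ∧ z ≤ z')`.
Hence `val` is a valuation on `K(t^H,β)` with value group `G_β`. -/
theorem twisted_hahn_series_valuation
    {K H A : Type*} [Field K]
    [AddCommGroup H] [LinearOrder H] [IsOrderedAddMonoid H] [AddCommGroup A] [LinearOrder A] [IsOrderedAddMonoid A]
    (v : K → WithTop A)
    (hv_top : ∀ x : K, v x = ⊤ ↔ x = 0)
    (hv_mul : ∀ x y : K, v (x * y) = v x + v y)
    (hv_add : ∀ x y : K, min (v x) (v y) ≤ v (x + y))
    (hv_surj : ∀ a : A, ∃ x : K, v x = (a : WithTop A))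
    (σ : A → Kˣ) (hσ : ∀ a a' : A, σ (a + a') = σ a * σ a')
    (hσ_cross : ∀ a : A, v ((σ a : K)) = (a : WithTop A))
    (β : H → H → A)
    (hβsymm : ∀ h h' : H, β h h' = β h' h)
    (hβnorm : ∀ h : H, β h 0 = 0 ∧ β 0 h = 0)
    (hβcoc : ∀ h h' h'' : H, β h h' + β (h + h') h'' = β h' h'' + β h (h' + h'')) :
    (∀ (a b : HahnSeries H K) (ha : a ≠ 0) (hb : b ≠ 0),
      ∃ hab : tmul σ β a b ≠ 0,
        minSupp (tmul σ β a b) hab = minSupp a ha + minSupp b hb ∧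
        v ((tmul σ β a b).coeff (minSupp (tmul σ β a b) hab))
            + (β (minSupp a ha) (minSupp b hb) : WithTop A)
          = v (a.coeff (minSupp a ha)) + v (b.coeff (minSupp b hb))) ∧
    (∀ (a b : HahnSeries H K) (ha : a ≠ 0) (hb : b ≠ 0) (hab : a + b ≠ 0),
      pLe (tval v a ha) (tval v (a + b) hab) ∨
      pLe (tval v b hb) (tval v (a + b) hab)) :=
  twisted_hahn_series_valuation_general v hv_mul hv_add σ hσ_cross β
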